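/- Every prefix p of a generalized fighting fish satisfies lat(p) ≥ 0 and long(p) ≥ 0; that is, viewed as a walk on Z², a generalized fighting fish is confined to the quarter plane {x ≥ 0, y ≥ 0}. -/

import Mathlib

/-- The four-letter alphabet of steps. -/
inductive Letter : Type
  | E | N | W | S
deriving DecidableEq, Repr

open Letter

/-- Fighting fish: words obtainable from `ENWS` by upper, lower and double gluings. -/
inductive IsFF : List Letter → Prop
  | base : IsFF [E, N, W, S]
  | upper (u v : List Letter) :
      IsFF (u ++ [W] ++ v) → IsFF (u ++ [N, W, S] ++ v)
  | lower (u v : List Letter) :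
      IsFF (u ++ [N] ++ v) → IsFF (u ++ [E, N, W] ++ v)
  | double (u v : List Letter) :
      IsFF (u ++ [W, N] ++ v) → IsFF (u ++ [N, W] ++ v)

/-- Generalized fighting fish: words obtainable from the empty word by the
operations `∇_k` (replace `N^k` by `E N^k W`) and `△_k` (replace `W^k` by `N W^k S`),
for `k ≥ 0`. -/
inductive IsGFF : List Letter → Prop
  | base : IsGFF []
  | nabla (u v : List Letter) (k : ℕ) :
      IsGFF (u ++ List.replicate k N ++ v) →
      IsGFF (u ++ [E] ++ List.replicate k N ++ [W] ++ v)
  | delta (u v : List Letter) (k : ℕ) :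
      IsGFF (u ++ List.replicate k W ++ v) →
      IsGFF (u ++ [N] ++ List.replicate k W ++ [S] ++ v)

/-- The latitude of a word: number of `N`'s minus number of `S`'s. -/
def lat (w : List Letter) : ℤ := (w.count N : ℤ) - (w.count S : ℤ)

/-- The longitude of a word: number of `E`'s minus number of `W`'s. -/
def long (w : List Letter) : ℤ := (w.count E : ℤ) - (w.count W : ℤ)

/-- The size of a word: half its length. -/
def size (w : List Letter) : ℕ := w.length / 2

/-! Both operations wrap a factor in a pair of letters, `E … W` or `N … S`. In each coordinate
the first letter of the pair is a step of `0` or `+1` and the pair as a whole is balanced, so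
every prefix of the new word ends at least as far from each axis as some prefix of the old word.
-/

theorem List.IsPrefix.append_cases {α : Type*} {p l₁ l₂ : List α} (h : p <+: l₁ ++ l₂) :
    p <+: l₁ ∨ ∃ q, q <+: l₂ ∧ p = l₁ ++ q := by
  obtain ⟨t, ht⟩ := h
  rcases List.append_eq_append_iff.1 ht with ⟨s, rfl, -⟩ | ⟨q, rfl, rfl⟩
  · exact Or.inl (List.prefix_append p s)
  · exact Or.inr ⟨q, List.prefix_append q t, rfl⟩

section Insertion

variable {α : Type*} {f : List α → ℤ}

theorem exists_prefix_le_of_insert (hf : ∀ x y, f (x ++ y) = f x + f y) {u m v : List α}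
    {a b : α} (ha : 0 ≤ f [a]) (hab : 0 ≤ f [a] + f [b]) {p : List α}
    (hp : p <+: u ++ [a] ++ m ++ [b] ++ v) : ∃ p', p' <+: u ++ m ++ v ∧ f p' ≤ f p := by
  simp only [List.append_assoc, List.cons_append, List.nil_append] at hp ⊢
  rcases hp.append_cases with hp | ⟨q, hq, rfl⟩
  · exact ⟨p, hp.trans (List.prefix_append _ _), le_rfl⟩
  rcases List.prefix_cons_iff.1 hq with rfl | ⟨q', rfl, hq'⟩
  · exact ⟨u, List.prefix_append _ _, by rw [List.append_nil]⟩
  have hfa (x y : List α) : f (x ++ a :: y) = f (x ++ y) + f [a] := by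
    rw [← List.singleton_append, hf, hf, hf]; ring
  rcases hq'.append_cases with hq' | ⟨r, hr, rfl⟩
  · refine ⟨u ++ q', ?_, by rw [hfa]; linarith⟩
    exact (List.prefix_append_right_inj u).2 (hq'.trans (List.prefix_append _ _))
  rcases List.prefix_cons_iff.1 hr with rfl | ⟨r', rfl, hr'⟩
  · exact ⟨u ++ m, by simp, by rw [hfa, List.append_nil]; linarith⟩
  refine ⟨u ++ m ++ r', by simpa using hr', ?_⟩
  rw [hfa, ← List.singleton_append, ← List.append_assoc, ← List.append_assoc, hf (_ ++ [b]),
    hf (_ ++ _), hf (_ ++ _)]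
  linarith

theorem prefix_nonneg_of_insert (hf : ∀ x y, f (x ++ y) = f x + f y) {u m v : List α}
    {a b : α} (ha : 0 ≤ f [a]) (hab : 0 ≤ f [a] + f [b])
    (h : ∀ p, p <+: u ++ m ++ v → 0 ≤ f p) (p : List α)
    (hp : p <+: u ++ [a] ++ m ++ [b] ++ v) : 0 ≤ f p := by
  obtain ⟨p', hp', hle⟩ := exists_prefix_le_of_insert hf ha hab hp
  exact (h p' hp').trans hle

end Insertion

theorem lat_append (x y : List Letter) : lat (x ++ y) = lat x + lat y := by
  simp only [lat, List.count_append]; push_cast; ring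

theorem long_append (x y : List Letter) : long (x ++ y) = long x + long y := by
  simp only [long, List.count_append]; push_cast; ring

/-- Every prefix of a generalized fighting fish has nonnegative latitude and
longitude: the associated walk is confined to the quarter plane `{x ≥ 0, y ≥ 0}`. -/
theorem gff_prefix_nonneg (w : List Letter) (hw : IsGFF w) :
    ∀ p : List Letter, p <+: w → 0 ≤ lat p ∧ 0 ≤ long p := by
  induction hw with
  | base =>
    intro p hp
    rw [List.prefix_nil.1 hp]
    decide
  | nabla _ _ _ _ ih | delta _ _ _ _ ih =>
    intro p hp
    exact ⟨prefix_nonneg_of_insert lat_append (by decide) (by decide) (fun q hq => (ih q hq).1)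
        p hp,
      prefix_nonneg_of_insert long_append (by decide) (by decide) (fun q hq => (ih q hq).2) p hp⟩
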